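/- arXiv:1810.06479 — 3 statements merged into one kernel-verified Lean document; each statement's English description precedes it below -/
import Mathlib

section
/- Let a > 0 and let x, y ∈ ℝ² satisfy ‖x − y‖ ≤ 2a. Then the two-dimensional Lebesgue measure of B(y,a) \ B(x,a) is at least (π·a/2)·‖x − y‖. -/
/-!
Move `y` to the origin and `x` to `(0, -d)`, `d = ‖x - y‖`, by a rigid motion. Over each abscissa
`t ∈ (-a, a)` put `c = √(a² - t²)`; the vertical segment `((1 - d/a) c, c)` lies in `B(0, a)`
because `d ≤ 2a` keeps its lower end above `-c`, and outside `B((0, -d), a)` because `c ≤ a`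
lifts `(1 - d/a) c + d` above `c`. The region swept by these segments has area
`(d/a) ∫ c dt = (d/a) · πa²/2`.
-/

open MeasureTheory Real

open Metric Set in
theorem volume_closedBall_diff_closedBall_congr {E : Type*} [NormedAddCommGroup E]
    [InnerProductSpace ℝ E] [FiniteDimensional ℝ E] [MeasurableSpace E] [BorelSpace E]
    {x y x' y' : E} (h : ‖x - y‖ = ‖x' - y'‖) (r s : ℝ) :
    volume (closedBall y r \ closedBall x s) = volume (closedBall y' r \ closedBall x' s) := by
  set L := (ℝ ∙ ((x - y) - (x' - y')))ᗮ.reflection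
  have hL : L (x - y) = x' - y' := Submodule.reflection_sub h
  have hφ : MeasurePreserving (fun z ↦ L (z - y) + y') :=
    (measurePreserving_add_right volume y').comp
      (L.measurePreserving.comp (measurePreserving_sub_right volume y))
  have hpre : (fun z ↦ L (z - y) + y') ⁻¹' (closedBall y' r \ closedBall x' s) =
      closedBall y r \ closedBall x s := by
    ext z
    have hx : L (z - y) + y' - x' = L (z - x) := by
      rw [show z - x = (z - y) - (x - y) by abel, L.map_sub (z - y), hL]; abel
    simp only [mem_preimage, mem_sdiff, mem_closedBall, dist_eq_norm, add_sub_cancel_right, hx,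
      LinearIsometryEquiv.norm_map]
  rw [← hpre, hφ.measure_preimage
    (measurableSet_closedBall.diff measurableSet_closedBall).nullMeasurableSet]

theorem integral_sqrt_sq_sub_sq {a : ℝ} (ha : 0 ≤ a) :
    ∫ t in -a..a, √(a ^ 2 - t ^ 2) = π * a ^ 2 / 2 := by
  have hscale : ∀ z : ℝ, √(a ^ 2 - (a * z) ^ 2) = a * √(1 - z ^ 2) := fun z ↦ by
    rw [show a ^ 2 - (a * z) ^ 2 = a ^ 2 * (1 - z ^ 2) by ring, sqrt_mul (sq_nonneg a),
      sqrt_sq ha]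
  have := intervalIntegral.smul_integral_comp_mul_left (a := -1) (b := 1)
    (fun t ↦ √(a ^ 2 - t ^ 2)) a
  simp only [hscale, intervalIntegral.integral_const_mul, integral_sqrt_one_sub_sq, smul_eq_mul,
    mul_neg, mul_one] at this
  rw [← this]
  ring

theorem volume_regionBetween_semicircle {a k : ℝ} (ha : 0 ≤ a) (hk : 0 ≤ k) :
    volume (regionBetween (fun t ↦ (1 - k) * √(a ^ 2 - t ^ 2)) (fun t ↦ √(a ^ 2 - t ^ 2))
      (Set.Ioo (-a) a)) = ENNReal.ofReal (k * (π * a ^ 2 / 2)) := by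
  have hint : ∀ c : ℝ, IntegrableOn (fun t ↦ c * √(a ^ 2 - t ^ 2)) (Set.Ioo (-a) a) :=
    fun c ↦ (Continuous.integrableOn_Icc (by fun_prop)).mono_set Set.Ioo_subset_Icc_self
  rw [Measure.volume_eq_prod, volume_regionBetween_eq_integral (hint (1 - k))
    (by simpa using hint 1) measurableSet_Ioo
    fun t _ ↦ by nlinarith [sqrt_nonneg (a ^ 2 - t ^ 2)]]
  congr 1
  simp only [Pi.sub_apply, show ∀ c : ℝ, c - (1 - k) * c = k * c by intro c; ring]
  rw [integral_const_mul, ← integral_Ioc_eq_integral_Ioo, ← intervalIntegral.integral_of_le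
    (by linarith), integral_sqrt_sq_sub_sq ha]

theorem sq_add_sq_lt_and_lt_of_mem_regionBetween {a d : ℝ} (ha : 0 < a) (hd : 0 ≤ d) (hda : d ≤ 2 * a)
    {t s : ℝ} (hts : (t, s) ∈ regionBetween (fun t ↦ (1 - d / a) * √(a ^ 2 - t ^ 2))
      (fun t ↦ √(a ^ 2 - t ^ 2)) (Set.Ioo (-a) a)) :
    t ^ 2 + s ^ 2 < a ^ 2 ∧ a ^ 2 < t ^ 2 + (s + d) ^ 2 := by
  obtain ⟨⟨hat, hta⟩, hlow, hup⟩ := hts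
  set c := √(a ^ 2 - t ^ 2)
  have hc2 : c ^ 2 = a ^ 2 - t ^ 2 := sq_sqrt (by nlinarith)
  have hc0 : 0 ≤ c := sqrt_nonneg _
  have hca : c ≤ a := by nlinarith
  have hlow' : c - d / a * c < s := by linarith
  have hdc : d / a * c ≤ d := by
    calc d / a * c ≤ d / a * a := by gcongr
      _ = d := div_mul_cancel₀ d ha.ne'
  have h2c : d / a * c ≤ 2 * c := by
    calc d / a * c ≤ 2 * a / a * c := by gcongr
      _ = 2 * c := by rw [mul_div_cancel_right₀ 2 ha.ne']
  constructor
  · nlinarith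
  · nlinarith

open Metric in
theorem ofReal_le_volume_closedBall_zero_diff_closedBall {a d : ℝ} (ha : 0 < a) (hd : 0 ≤ d)
    (hda : d ≤ 2 * a) :
    ENNReal.ofReal (π * a / 2 * d) ≤
      volume (closedBall (0 : EuclideanSpace ℝ (Fin 2)) a \ closedBall !₂[0, -d] a) := by
  have hψ : MeasurePreserving (fun p : ℝ × ℝ ↦ !₂[p.1, p.2]) :=
    (PiLp.volume_preserving_toLp (Fin 2)).comp (volume_preserving_finTwoArrow ℝ).symm
  have hnorm : ∀ t s : ℝ, ‖!₂[t, s]‖ = √(t ^ 2 + s ^ 2) := fun t s ↦ by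
    simp [EuclideanSpace.norm_eq, Fin.sum_univ_two]
  have hsub : regionBetween (fun t ↦ (1 - d / a) * √(a ^ 2 - t ^ 2)) (fun t ↦ √(a ^ 2 - t ^ 2))
      (Set.Ioo (-a) a) ⊆ (fun p : ℝ × ℝ ↦ !₂[p.1, p.2]) ⁻¹'
        (closedBall 0 a \ closedBall !₂[0, -d] a) := by
    rintro ⟨t, s⟩ hts
    obtain ⟨hin, hout⟩ := sq_add_sq_lt_and_lt_of_mem_regionBetween ha hd hda hts
    have hshift : !₂[t, s] - !₂[0, -d] = !₂[t, s + d] := by ext i; fin_cases i <;> simp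
    simp only [Set.mem_preimage, Set.mem_sdiff, mem_closedBall, dist_eq_norm, sub_zero, not_le,
      hshift, hnorm]
    exact ⟨(sqrt_le_left ha.le).2 hin.le, (lt_sqrt ha.le).2 hout⟩
  calc ENNReal.ofReal (π * a / 2 * d)
      = volume (regionBetween (fun t ↦ (1 - d / a) * √(a ^ 2 - t ^ 2))
          (fun t ↦ √(a ^ 2 - t ^ 2)) (Set.Ioo (-a) a)) := by
        rw [volume_regionBetween_semicircle ha.le (by positivity)]
        congr 1
        field_simp
    _ ≤ _ := by
        grw [hsub, hψ.measure_preimage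
          (measurableSet_closedBall.diff measurableSet_closedBall).nullMeasurableSet]

theorem stmt9 (a : ℝ) (ha : 0 < a) (x y : EuclideanSpace ℝ (Fin 2))
    (hxy : ‖x - y‖ ≤ 2 * a) :
    π * a / 2 * ‖x - y‖ ≤
      (volume (Metric.closedBall y a \ Metric.closedBall x a)).toReal := by
  have hmodel := ofReal_le_volume_closedBall_zero_diff_closedBall ha (norm_nonneg (x - y)) hxy
  rw [← volume_closedBall_diff_closedBall_congr (x := x) (y := y)
    (by simp [EuclideanSpace.norm_eq])] at hmodel
  have hfin : volume (Metric.closedBall y a \ Metric.closedBall x a) ≠ ⊤ :=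
    (measure_mono Set.sdiff_subset |>.trans_lt measure_closedBall_lt_top).ne
  exact (ENNReal.ofReal_le_iff_le_toReal hfin).1 hmodel
end

section
/- Let a > 0 and define φ : [0, 2a] → ℝ by φ(d) = (two-dimensional Lebesgue measure of B((d,0), a) \ B((0,0), a)). Then φ is concave on [0, 2a], φ(0) = 0, and φ(2a) = π·a². -/
open MeasureTheory Real

/-- The point `(d, 0)` of the Euclidean plane. -/
noncomputable def pt (d : ℝ) : EuclideanSpace ℝ (Fin 2) :=
  (EuclideanSpace.equiv (Fin 2) ℝ).symm ![d, 0]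

/-- `φ a d` is the area of `B((d,0),a) \ B((0,0),a)`. -/
noncomputable def phi (a d : ℝ) : ℝ :=
  (volume (Metric.closedBall (pt d) a \ Metric.closedBall (pt 0) a)).toReal

/-!
Slice along the lines parallel to the axis of the centres. At height `y` both discs cut out
intervals of length `2√(a² - y²)`, the first shifted by `d` against the second, so the part of the
first outside the second has length `min d (2√(a² - y²))`. Hence `φ d = ∫ min d (2√(a² - y²)) dy`
is an integral of concave functions of `d`. At `d = 2a` the two discs meet only on a circle, a
null set, so `φ (2a)` is the area `πa²` of a disc.
-/

open Metric Set

lemma measurePreserving_coords_fin_two :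
    MeasurePreserving (fun x : EuclideanSpace ℝ (Fin 2) => (x 0, x 1)) :=
  (volume_preserving_finTwoArrow ℝ).comp
    (EuclideanSpace.volume_preserving_symm_measurableEquiv_toLp (Fin 2))

lemma dist_pt (d e : ℝ) : dist (pt d) (pt e) = |d - e| := by
  rw [EuclideanSpace.dist_eq, Fin.sum_univ_two]
  simp [pt, Real.dist_eq, Real.sqrt_sq_eq_abs]

lemma closedBall_pt_eq_preimage {a : ℝ} (ha : 0 ≤ a) (d : ℝ) :
    closedBall (pt d) a = (fun x : EuclideanSpace ℝ (Fin 2) => (x 0, x 1)) ⁻¹'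
      {p : ℝ × ℝ | (p.1 - d) ^ 2 + p.2 ^ 2 ≤ a ^ 2} := by
  ext x
  rw [mem_closedBall, EuclideanSpace.dist_eq, Real.sqrt_le_left ha, Fin.sum_univ_two]
  simp [pt, Real.dist_eq]

lemma volume_Icc_sdiff_Icc {d w : ℝ} (hd : 0 ≤ d) :
    volume (Icc (d - w) (d + w) \ Icc (-w) w) = ENNReal.ofReal (min d (2 * w)) := by
  rcases le_or_gt d (2 * w) with hdw | hdw
  · have : Icc (d - w) (d + w) \ Icc (-w) w = Ioc w (d + w) := by
      ext x
      simp only [mem_sdiff, mem_Icc, mem_Ioc, not_and, not_le]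
      constructor
      · rintro ⟨⟨h1, h2⟩, h3⟩
        exact ⟨h3 (by linarith), h2⟩
      · rintro ⟨h1, h2⟩
        exact ⟨⟨by linarith, h2⟩, fun _ => h1⟩
    rw [this, Real.volume_Ioc, min_eq_left hdw]
    ring_nf
  · have : Icc (d - w) (d + w) \ Icc (-w) w = Icc (d - w) (d + w) :=
      sdiff_eq_left.2 <| disjoint_left.2 fun x h1 h2 => by linarith [h1.1, h2.2]
    rw [this, Real.volume_Icc, min_eq_right hdw.le]
    ring_nf

lemma setOf_sub_sq_le_eq_Icc {c : ℝ} (hc : 0 ≤ c) (d : ℝ) :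
    {x : ℝ | (x - d) ^ 2 ≤ c} = Icc (d - √c) (d + √c) := by
  ext x
  rw [mem_ofPred_eq, Real.sq_le hc, mem_Icc]
  constructor <;> rintro ⟨h1, h2⟩ <;> constructor <;> linarith

lemma volume_setOf_sub_sq_le_sdiff {d : ℝ} (hd : 0 ≤ d) (c : ℝ) :
    volume ({x : ℝ | (x - d) ^ 2 ≤ c} \ {x | x ^ 2 ≤ c}) = ENNReal.ofReal (min d (2 * √c)) := by
  rcases le_or_gt 0 c with hc | hc
  · have h0 := setOf_sub_sq_le_eq_Icc hc 0
    simp only [sub_zero, zero_sub, zero_add] at h0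
    rw [setOf_sub_sq_le_eq_Icc hc, h0, volume_Icc_sdiff_Icc hd]
  · have : {x : ℝ | (x - d) ^ 2 ≤ c} = ∅ :=
      eq_empty_of_forall_notMem fun x hx => (hc.trans_le (sq_nonneg _)).not_ge hx
    rw [this, empty_sdiff, measure_empty, Real.sqrt_eq_zero'.2 hc.le, mul_zero, min_eq_right hd,
      ENNReal.ofReal_zero]

lemma volume_closedBall_pt_sdiff {a d : ℝ} (ha : 0 ≤ a) (hd : 0 ≤ d) :
    volume (closedBall (pt d) a \ closedBall (pt 0) a) =
      ∫⁻ y, ENNReal.ofReal (min d (2 * √(a ^ 2 - y ^ 2))) := by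
  have hmeas : ∀ e : ℝ, MeasurableSet {p : ℝ × ℝ | (p.1 - e) ^ 2 + p.2 ^ 2 ≤ a ^ 2} :=
    fun e => measurableSet_le (by fun_prop) measurable_const
  rw [closedBall_pt_eq_preimage ha, closedBall_pt_eq_preimage ha, ← preimage_sdiff,
    measurePreserving_coords_fin_two.measure_preimage ((hmeas d).diff (hmeas 0)).nullMeasurableSet,
    Measure.volume_eq_prod, Measure.prod_apply_symm ((hmeas d).diff (hmeas 0))]
  refine lintegral_congr fun y => ?_
  have hslice : (fun x => (x, y)) ⁻¹' ({p : ℝ × ℝ | (p.1 - d) ^ 2 + p.2 ^ 2 ≤ a ^ 2} \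
      {p : ℝ × ℝ | (p.1 - 0) ^ 2 + p.2 ^ 2 ≤ a ^ 2}) =
      {x | (x - d) ^ 2 ≤ a ^ 2 - y ^ 2} \ {x | x ^ 2 ≤ a ^ 2 - y ^ 2} := by
    ext x
    simp only [mem_preimage, mem_sdiff, mem_ofPred_eq, sub_zero, le_sub_iff_add_le]
  rw [hslice, volume_setOf_sub_sq_le_sdiff hd]

lemma phi_eq_integral_min {a d : ℝ} (ha : 0 ≤ a) (hd : 0 ≤ d) :
    phi a d = ∫ y, min d (2 * √(a ^ 2 - y ^ 2)) := by
  rw [phi, volume_closedBall_pt_sdiff ha hd, integral_eq_lintegral_of_nonneg_ae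
    (Filter.Eventually.of_forall fun y => le_min hd (by positivity)) (by fun_prop)]

lemma integrable_two_mul_sqrt_sq_sub_sq (a : ℝ) :
    Integrable fun y : ℝ => 2 * √(a ^ 2 - y ^ 2) := by
  refine (by fun_prop : Continuous _).integrable_of_hasCompactSupport <|
    HasCompactSupport.intro (isCompact_Icc (a := -|a|) (b := |a|)) fun y hy => ?_
  have : a ^ 2 < y ^ 2 := sq_lt_sq.2 <| not_le.1 fun h => hy (abs_le.1 h)
  rw [Real.sqrt_eq_zero'.2 (by linarith), mul_zero]

lemma concaveOn_integral_min {X : Type*} [MeasurableSpace X] {μ : Measure X} {k : X → ℝ}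
    (hk : Integrable k μ) : ConcaveOn ℝ (Ici 0) fun d => ∫ y, min d (k y) ∂μ := by
  have hint : ∀ d : ℝ, 0 ≤ d → Integrable (fun y => min d (k y)) μ := fun d hd =>
    hk.mono (aestronglyMeasurable_const.inf hk.1) <| Filter.Eventually.of_forall fun y => by
      simp only [Real.norm_eq_abs]
      exact abs_le.2 ⟨le_min (by linarith [abs_nonneg (k y)]) (neg_abs_le _),
        (min_le_right _ _).trans (le_abs_self _)⟩
  refine ⟨convex_Ici 0, fun x hx z hz s t hs ht hst => ?_⟩
  rw [mem_Ici] at hx hz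
  simp only [smul_eq_mul, ← integral_const_mul]
  rw [← integral_add ((hint x hx).const_mul s) ((hint z hz).const_mul t)]
  refine integral_mono ((hint x hx).const_mul s |>.add ((hint z hz).const_mul t))
    (hint _ (by positivity)) fun y => ?_
  have hxl := mul_le_mul_of_nonneg_left (min_le_left x (k y)) hs
  have hzl := mul_le_mul_of_nonneg_left (min_le_left z (k y)) ht
  have hxr := mul_le_mul_of_nonneg_left (min_le_right x (k y)) hs
  have hzr := mul_le_mul_of_nonneg_left (min_le_right z (k y)) ht
  exact le_min (by linarith) (by linear_combination hxr + hzr + k y * hst)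

lemma measure_closedBall_sdiff_of_dist_eq {E : Type*} [NormedAddCommGroup E] [NormedSpace ℝ E]
    [FiniteDimensional ℝ E] [Nontrivial E] [MeasurableSpace E] [BorelSpace E] (μ : Measure E)
    [μ.IsAddHaarMeasure] {x z : E} {r : ℝ} (h : dist x z = 2 * r) :
    μ (closedBall x r \ closedBall z r) = μ (closedBall x r) := by
  refine measure_sdiff_null' <|
    measure_mono_null (fun p ⟨hx, hz⟩ => ?_) (Measure.addHaar_sphere μ z r)
  rw [mem_closedBall] at hx hz
  rw [mem_sphere]
  linarith [dist_triangle x p z, dist_comm p x]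

theorem stmt10 (a : ℝ) (ha : 0 < a) :
    ConcaveOn ℝ (Set.Icc 0 (2 * a)) (phi a) ∧ phi a 0 = 0 ∧ phi a (2 * a) = π * a ^ 2 := by
  refine ⟨?_, by simp [phi], ?_⟩
  · refine ((concaveOn_integral_min (integrable_two_mul_sqrt_sq_sub_sq a)).subset
      Icc_subset_Ici_self (convex_Icc _ _)).congr fun d hd => ?_
    exact (phi_eq_integral_min ha.le hd.1).symm
  · have hdist : dist (pt (2 * a)) (pt 0) = 2 * a := by
      rw [dist_pt, sub_zero, abs_of_pos (by positivity)]
    rw [phi, measure_closedBall_sdiff_of_dist_eq volume hdist,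
      EuclideanSpace.volume_closedBall_fin_two]
    rw [ENNReal.toReal_mul, ENNReal.toReal_pow, ENNReal.toReal_ofReal ha.le,
      ENNReal.toReal_ofReal pi_pos.le, mul_comm]
end

section
/- Let u ≥ 0 be a real number. For each natural number n ≥ 1, let (Ω_n, μ_n) be a probability space and let E_{n,1}, …, E_{n,n} be measurable events in Ω_n. Assume (i) exchangeability: for every κ with 1 ≤ κ ≤ n and every set of distinct indices i₁, …, i_κ ∈ {1, …, n}, μ_n(E_{n,i₁} ∩ ⋯ ∩ E_{n,i_κ}) = μ_n(E_{n,1} ∩ ⋯ ∩ E_{n,κ}); and (ii) for every fixed integer κ ≥ 1, n^κ · μ_n(E_{n,1} ∩ ⋯ ∩ E_{n,κ}) → u^κ as n → ∞. Let U_n(ω) be the number of indices i ∈ {1, …, n} with ω ∈ E_{n,i}. Then for every m ∈ ℕ, μ_n({ω : U_n(ω) = m}) → e^{−u}·u^m/m! as n → ∞; that is, U_n converges in distribution to a Poisson random variable with mean u. -/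
/-!
Method of binomial moments. Writing `U` for the number of events that occur, the truncated
inclusion–exclusion formula `P(U = m) ≈ ∑_{j ≤ t} (-1)^j C(m+j, m) E[C(U, m+j)]` errs by at
most the first omitted term `C(m+t+1, m) E[C(U, m+t+1)]` (Bonferroni), and `E[C(U, κ)]` is the
sum of the probabilities of all `κ`-fold intersections. By exchangeability this sum equals
`C(n, κ) μ_n(E_{n,1} ∩ ⋯ ∩ E_{n,κ}) → u^κ / κ!`, so as `n → ∞` the truncated sum tends to a
partial sum of `e^{-u} u^m / m! = ∑_j (-1)^j C(m+j, m) u^{m+j} / (m+j)!` and the error to a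
tail term of this series, which vanishes as `t → ∞`.
-/

open MeasureTheory Filter Finset Topology Asymptotics

lemma sum_neg_one_pow_mul_choose_mul_choose (U m t : ℕ) :
    ∑ j ∈ range (t + 1), (-1 : ℤ) ^ j * (m + j).choose m * U.choose (m + j)
      = U.choose m * ∑ j ∈ range (t + 1), (-1 : ℤ) ^ j * (U - m).choose j := by
  rw [mul_sum]
  refine sum_congr rfl fun j _ => ?_
  have h := Nat.choose_mul (n := U) (Nat.le_add_right m j)
  rw [Nat.add_sub_cancel_left] at h
  have h' : (U.choose (m + j) * (m + j).choose m : ℤ) = U.choose m * (U - m).choose j := by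
    exact_mod_cast h
  linear_combination (-1 : ℤ) ^ j * h'

lemma abs_sum_neg_one_pow_mul_choose_mul_choose_sub_le (U m t : ℕ) :
    |∑ j ∈ range (t + 1), (-1 : ℤ) ^ j * (m + j).choose m * U.choose (m + j)
        - if U = m then 1 else 0|
      ≤ (m + t + 1).choose m * U.choose (m + t + 1) := by
  rw [sum_neg_one_pow_mul_choose_mul_choose]
  rcases lt_trichotomy U m with hlt | rfl | hgt
  · simp [Nat.choose_eq_zero_of_lt hlt, hlt.ne]
    positivity
  · simp [sum_range_succ', Nat.choose_eq_zero_of_lt (show U < U + t + 1 by omega)]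
  · obtain ⟨N, hN⟩ : ∃ N, U - m = N + 1 := ⟨U - m - 1, by omega⟩
    have hchoose : U.choose (m + t + 1) * (m + t + 1).choose m
        = U.choose m * (N + 1).choose (t + 1) := by
      rw [Nat.choose_mul (by omega), hN, show m + t + 1 - m = t + 1 by omega]
    rw [hN, Int.alternating_sum_range_choose_eq_choose, if_neg hgt.ne', sub_zero, abs_mul,
      abs_mul, abs_pow, abs_neg, abs_one, one_pow, one_mul, Nat.abs_cast, Nat.abs_cast]
    calc (U.choose m : ℤ) * N.choose t ≤ U.choose m * (N + 1).choose (t + 1) := by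
          gcongr
          exact_mod_cast (Nat.choose_succ_succ' N t).symm ▸ Nat.le_add_right _ _
      _ = (m + t + 1).choose m * U.choose (m + t + 1) := by
          rw [mul_comm (((m + t + 1).choose m : ℕ) : ℤ)]; exact_mod_cast hchoose.symm

lemma choose_natCard_mem_eq_sum_indicator {Ω ι : Type*} [Fintype ι] (E : ι → Set Ω) (ω : Ω)
    (κ : ℕ) :
    ((Nat.card {i // ω ∈ E i}).choose κ : ℝ)
      = ∑ S ∈ powersetCard κ (univ : Finset ι), (⋂ i ∈ S, E i).indicator 1 ω := by
  classical
  have hsubsets : (powersetCard κ univ).filter (fun S => ω ∈ ⋂ i ∈ S, E i)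
      = powersetCard κ (univ.filter fun i => ω ∈ E i) := by
    ext S
    simp [mem_powersetCard, subset_iff, and_comm]
  simp only [Set.indicator_apply, Pi.one_apply, sum_boole, hsubsets, card_powersetCard,
    Nat.card_eq_fintype_card, Fintype.card_subtype]

section Counting

variable {Ω ι : Type*} [MeasurableSpace Ω] [Fintype ι] {E : ι → Set Ω}

lemma measurable_natCard_mem (hE : ∀ i, MeasurableSet (E i)) :
    Measurable fun ω => Nat.card {i // ω ∈ E i} := by
  classical
  have hcount : (fun ω => Nat.card {i // ω ∈ E i}) = fun ω => ∑ i, (E i).indicator 1 ω := by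
    ext ω
    simp only [Nat.card_eq_fintype_card, Fintype.card_subtype, card_filter, Set.indicator_apply,
      Pi.one_apply]
  rw [hcount]
  exact Finset.measurable_sum _ fun i _ => measurable_one.indicator (hE i)

variable (μ : Measure Ω) [IsFiniteMeasure μ]

lemma integrable_choose_natCard_mem (hE : ∀ i, MeasurableSet (E i)) (κ : ℕ) :
    Integrable (fun ω => ((Nat.card {i // ω ∈ E i}).choose κ : ℝ)) μ := by
  simp only [choose_natCard_mem_eq_sum_indicator]
  exact integrable_finsetSum _ fun S _ =>
    (integrable_const 1).indicator (S.measurableSet_biInter fun i _ => hE i)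

lemma integral_choose_natCard_mem (hE : ∀ i, MeasurableSet (E i)) (κ : ℕ) :
    ∫ ω, ((Nat.card {i // ω ∈ E i}).choose κ : ℝ) ∂μ
      = ∑ S ∈ powersetCard κ (univ : Finset ι), μ.real (⋂ i ∈ S, E i) := by
  simp only [choose_natCard_mem_eq_sum_indicator]
  rw [integral_finsetSum _ fun S _ =>
    (integrable_const 1).indicator (S.measurableSet_biInter fun i _ => hE i)]
  exact sum_congr rfl fun S _ => integral_indicator_one (S.measurableSet_biInter fun i _ => hE i)

lemma abs_measureReal_natCard_mem_eq_sub_le (hE : ∀ i, MeasurableSet (E i)) (m t : ℕ) :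
    |μ.real {ω | Nat.card {i // ω ∈ E i} = m}
        - ∑ j ∈ range (t + 1), (-1 : ℝ) ^ j * (m + j).choose m
          * ∑ S ∈ powersetCard (m + j) (univ : Finset ι), μ.real (⋂ i ∈ S, E i)|
      ≤ (m + t + 1).choose m
        * ∑ S ∈ powersetCard (m + t + 1) (univ : Finset ι), μ.real (⋂ i ∈ S, E i) := by
  have hU : MeasurableSet {ω | Nat.card {i // ω ∈ E i} = m} :=
    measurable_natCard_mem hE (measurableSet_singleton m)
  have hint := integrable_choose_natCard_mem μ hE
  simp only [← integral_choose_natCard_mem μ hE, ← integral_const_mul,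
    ← integral_finsetSum _ fun j _ => (hint _).const_mul _]
  rw [← integral_indicator_one hU]
  have hind : Integrable ({ω | Nat.card {i // ω ∈ E i} = m}.indicator (1 : Ω → ℝ)) μ :=
    (integrable_const 1).indicator hU
  rw [← integral_sub hind (integrable_finsetSum _ fun j _ =>
    (hint (m + j)).const_mul ((-1 : ℝ) ^ j * (m + j).choose m)), ← Real.norm_eq_abs]
  refine norm_integral_le_of_norm_le ((hint (m + t + 1)).const_mul _) (ae_of_all _ fun ω => ?_)
  have hbonf := abs_sum_neg_one_pow_mul_choose_mul_choose_sub_le (Nat.card {i // ω ∈ E i}) m t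
  rw [abs_sub_comm] at hbonf
  simp only [Set.indicator_apply, Set.mem_ofPred_eq, Pi.one_apply, Real.norm_eq_abs]
  exact_mod_cast hbonf

end Counting

lemma sum_powersetCard_measureReal_biInter_eq {Ω : Type*} [MeasurableSpace Ω] (μ : Measure Ω)
    (E : ℕ → Set Ω) {n κ : ℕ}
    (hexch : ∀ ι : Fin κ → ℕ, Function.Injective ι → (∀ j, ι j < n) →
      μ (⋂ j, E (ι j)) = μ (⋂ j : Fin κ, E j)) :
    ∑ S ∈ powersetCard κ (univ : Finset (Fin n)), μ.real (⋂ i ∈ S, E i)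
      = n.choose κ * μ.real (⋂ j : Fin κ, E j) := by
  have hS : ∀ S ∈ powersetCard κ (univ : Finset (Fin n)),
      μ.real (⋂ i ∈ S, E i) = μ.real (⋂ j : Fin κ, E j) := by
    intro S hS
    have hcard := (mem_powersetCard.1 hS).2
    set f := S.orderEmbOfFin hcard
    have hrange : ⋂ i ∈ S, E i = ⋂ j, E (f j) := by
      rw [← set_biInter_coe, ← S.range_orderEmbOfFin hcard, Set.biInter_range]
    rw [Measure.real, Measure.real, hrange,
      hexch (fun j => f j) (Fin.val_injective.comp f.injective) fun j => (f j).isLt]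
  rw [sum_congr rfl hS, sum_const, card_powersetCard, card_univ, Fintype.card_fin, nsmul_eq_mul]

lemma tendsto_choose_mul_of_tendsto_pow_mul {p : ℕ → ℝ} {a : ℝ} {κ : ℕ}
    (h : Tendsto (fun n : ℕ => (n : ℝ) ^ κ * p n) atTop (𝓝 a)) :
    Tendsto (fun n : ℕ => n.choose κ * p n) atTop (𝓝 (a / κ.factorial)) := by
  have hequiv : (fun n : ℕ => n.choose κ * p n)
      ~[atTop] fun n => (n : ℝ) ^ κ * p n / κ.factorial :=
    ((isEquivalent_choose κ).mul IsEquivalent.refl).congr_right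
      (.of_eq (by ext; simp only [Pi.mul_apply]; ring))
  exact hequiv.tendsto_nhds_iff.mpr (h.div_const _)

lemma choose_mul_pow_div_factorial_add (u : ℝ) (m j : ℕ) :
    (m + j).choose m * (u ^ (m + j) / (m + j).factorial)
      = u ^ m / m.factorial * (u ^ j / j.factorial) := by
  have hc : ((m + j).choose j : ℝ) ≠ 0 := by
    exact_mod_cast (Nat.choose_pos (Nat.le_add_left j m)).ne'
  rw [Nat.choose_symm_add, ← Nat.add_choose_mul_factorial_mul_factorial m j]
  push_cast
  field_simp
  ring

lemma tendsto_sum_neg_one_pow_mul_choose_mul_pow_div_factorial (u : ℝ) (m : ℕ) :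
    Tendsto (fun t => ∑ j ∈ range (t + 1),
        (-1 : ℝ) ^ j * (m + j).choose m * (u ^ (m + j) / (m + j).factorial))
      atTop (𝓝 (Real.exp (-u) * u ^ m / m.factorial)) := by
  have hexp : HasSum (fun j => (-u) ^ j / j.factorial) (Real.exp (-u)) := by
    rw [Real.exp_eq_exp_ℝ]
    exact NormedSpace.expSeries_div_hasSum_exp (-u)
  have hterm : ∀ j, (-1 : ℝ) ^ j * (m + j).choose m * (u ^ (m + j) / (m + j).factorial)
      = u ^ m / m.factorial * ((-u) ^ j / j.factorial) := by
    intro j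
    rw [mul_assoc, choose_mul_pow_div_factorial_add, neg_pow]
    ring
  simp only [hterm, ← mul_sum]
  rw [show Real.exp (-u) * u ^ m / m.factorial = u ^ m / m.factorial * Real.exp (-u) by ring]
  exact (hexp.tendsto_sum_nat.comp (tendsto_add_atTop_nat 1)).const_mul _

lemma tendsto_choose_mul_pow_div_factorial_add (u : ℝ) (m : ℕ) :
    Tendsto (fun t =>
        ((m + t + 1).choose m : ℝ) * (u ^ (m + t + 1) / (m + t + 1).factorial)) atTop (𝓝 0) := by
  simp only [add_assoc, choose_mul_pow_div_factorial_add]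
  simpa using ((FloorSemiring.tendsto_pow_div_factorial_atTop u).comp
    (tendsto_add_atTop_nat 1)).const_mul (u ^ m / m.factorial)

lemma tendsto_of_abs_sub_le {α : Type*} {l : Filter α} {a : α → ℝ} {L : ℝ}
    {s r : ℕ → α → ℝ} {σ ρ : ℕ → ℝ}
    (hs : ∀ t, Tendsto (s t) l (𝓝 (σ t))) (hr : ∀ t, Tendsto (r t) l (𝓝 (ρ t)))
    (hσ : Tendsto σ atTop (𝓝 L)) (hρ : Tendsto ρ atTop (𝓝 0))
    (hbound : ∀ t, ∀ᶠ x in l, |a x - s t x| ≤ r t x) :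
    Tendsto a l (𝓝 L) := by
  rw [Metric.tendsto_nhds]
  intro ε hε
  obtain ⟨t, hσt, hρt⟩ := ((Metric.tendsto_nhds.1 hσ (ε / 4) (by positivity)).and
    (Metric.tendsto_nhds.1 hρ (ε / 4) (by positivity))).exists
  filter_upwards [hbound t, Metric.tendsto_nhds.1 (hs t) (ε / 4) (by positivity),
    Metric.tendsto_nhds.1 (hr t) (ε / 4) (by positivity)] with x hx hsx hrx
  rw [Real.dist_eq] at *
  rw [sub_zero] at hρt
  linarith [abs_sub_le (a x) (s t x) L, abs_sub_le (s t x) (σ t) L, (abs_lt.1 hrx).2,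
    (abs_lt.1 hρt).2]

theorem stmt18_general (u : ℝ)
    (Ω : ℕ → Type) (mΩ : ∀ n, MeasurableSpace (Ω n))
    (μ : ∀ n, Measure (Ω n)) (hμ : ∀ n, IsProbabilityMeasure (μ n))
    (E : ∀ n, ℕ → Set (Ω n)) (hE : ∀ n i, MeasurableSet (E n i))
    (hexch : ∀ n, 1 ≤ n → ∀ κ : ℕ, 1 ≤ κ → κ ≤ n → ∀ ι : Fin κ → ℕ,
      Function.Injective ι → (∀ j, ι j < n) →
      μ n (⋂ j : Fin κ, E n (ι j)) = μ n (⋂ j : Fin κ, E n j))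
    (hlim : ∀ κ : ℕ, 1 ≤ κ →
      Tendsto (fun n : ℕ => (n : ℝ) ^ κ * (μ n (⋂ j : Fin κ, E n j)).toReal)
        atTop (nhds (u ^ κ))) :
    ∀ m : ℕ,
      Tendsto (fun n : ℕ =>
          (μ n {ω | Nat.card {i : Fin n // ω ∈ E n i} = m}).toReal)
        atTop (nhds (Real.exp (-u) * u ^ m / m.factorial)) := by
  intro m
  set b : ℕ → ℕ → ℝ := fun κ n => n.choose κ * (μ n).real (⋂ j : Fin κ, E n j)
  have hb : ∀ κ, Tendsto (b κ) atTop (𝓝 (u ^ κ / κ.factorial)) := by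
    rintro (_ | κ)
    · simp [b]
    · exact tendsto_choose_mul_of_tendsto_pow_mul (hlim _ κ.succ_pos)
  have hmoment : ∀ κ n, κ ≤ n →
      ∑ S ∈ powersetCard κ (univ : Finset (Fin n)), (μ n).real (⋂ i ∈ S, E n i) = b κ n := by
    intro κ n hκn
    refine sum_powersetCard_measureReal_biInter_eq (μ n) (E n) fun ι hι hιn => ?_
    rcases κ.eq_zero_or_pos with rfl | hκ
    · simp
    · exact hexch n (by omega) κ hκ hκn ι hι hιn
  refine tendsto_of_abs_sub_le
    (fun t => tendsto_finsetSum _ fun j _ => (hb (m + j)).const_mul _)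
    (fun t => (hb (m + t + 1)).const_mul _)
    (tendsto_sum_neg_one_pow_mul_choose_mul_pow_div_factorial u m)
    (tendsto_choose_mul_pow_div_factorial_add u m) fun t => ?_
  filter_upwards [eventually_ge_atTop (m + t + 1)] with n hn
  have := hμ n
  have hbonf := abs_measureReal_natCard_mem_eq_sub_le (μ n) (fun i : Fin n => hE n i) m t
  rwa [hmoment _ _ hn, sum_congr rfl fun j hj => by
    rw [hmoment _ _ (by have := mem_range.1 hj; omega)]] at hbonf

theorem stmt18 (u : ℝ) (hu : 0 ≤ u)
    (Ω : ℕ → Type) (mΩ : ∀ n, MeasurableSpace (Ω n))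
    (μ : ∀ n, Measure (Ω n)) (hμ : ∀ n, IsProbabilityMeasure (μ n))
    (E : ∀ n, ℕ → Set (Ω n)) (hE : ∀ n i, MeasurableSet (E n i))
    (hexch : ∀ n, 1 ≤ n → ∀ κ : ℕ, 1 ≤ κ → κ ≤ n → ∀ ι : Fin κ → ℕ,
      Function.Injective ι → (∀ j, ι j < n) →
      μ n (⋂ j : Fin κ, E n (ι j)) = μ n (⋂ j : Fin κ, E n j))
    (hlim : ∀ κ : ℕ, 1 ≤ κ →
      Tendsto (fun n : ℕ => (n : ℝ) ^ κ * (μ n (⋂ j : Fin κ, E n j)).toReal)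
        atTop (nhds (u ^ κ))) :
    ∀ m : ℕ,
      Tendsto (fun n : ℕ =>
          (μ n {ω | Nat.card {i : Fin n // ω ∈ E n i} = m}).toReal)
        atTop (nhds (Real.exp (-u) * u ^ m / m.factorial)) :=
  stmt18_general u Ω mΩ μ hμ E hE hexch hlim
end
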